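/- Let n_b : ℝ → ℝ and 𝒢_b : ℝ → ℝ be differentiable with 𝒢_b′(z) = ℏ n_b(z) 𝒢_b(z) for all z, let T : ℝ → ℝ be twice differentiable with n_b·(T′∘𝒢_b)·𝒢_b differentiable, and let n* : ℝ³ → ℝ be continuously differentiable. Define 𝒢*(x₁,x₂,x₃) = ℏ (∫₁^{x₃} n*(x₁,x₂,s) ds) 𝒢_b(x₃), the vector fields P_b(x) = T(𝒢_b(x₃)) e₃ and P*(x) = 𝒢*(x) T′(𝒢_b(x₃)) e₃. Then div(n* P_b + n_b P*) = 2 ℏ n_b(x₃) 𝒢_b(x₃) T′(𝒢_b(x₃)) n*(x) + T(𝒢_b(x₃)) ∂n*/∂x₃ + ℏ (d/dx₃)[n_b(x₃) 𝒢_b(x₃) T′(𝒢_b(x₃))] ∫₁^{x₃} n*(x₁,x₂,s) ds. -/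

import Mathlib

/-- Partial derivative in the first coordinate of ℝ³ (realized as ℝ × ℝ × ℝ). -/
noncomputable def pd1 (f : ℝ × ℝ × ℝ → ℝ) (p : ℝ × ℝ × ℝ) : ℝ :=
  deriv (fun t => f (t, p.2.1, p.2.2)) p.1

/-- Partial derivative in the second coordinate. -/
noncomputable def pd2 (f : ℝ × ℝ × ℝ → ℝ) (p : ℝ × ℝ × ℝ) : ℝ :=
  deriv (fun t => f (p.1, t, p.2.2)) p.2.1

/-- Partial derivative in the third coordinate. -/
noncomputable def pd3 (f : ℝ × ℝ × ℝ → ℝ) (p : ℝ × ℝ × ℝ) : ℝ :=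
  deriv (fun t => f (p.1, p.2.1, t)) p.2.2

/-- The divergence of a vector field on ℝ³. -/
noncomputable def div3 (F : ℝ × ℝ × ℝ → ℝ × ℝ × ℝ) (p : ℝ × ℝ × ℝ) : ℝ :=
  pd1 (fun q => (F q).1) p + pd2 (fun q => (F q).2.1) p + pd3 (fun q => (F q).2.2) p

/-! The field is vertical, so its divergence is the `x₃`-derivative of its third component, and
along a vertical line everything is a function of `x₃` alone. There the Beer–Lambert law
`𝒢_b' = ℏ n_b 𝒢_b` turns `(T ∘ 𝒢_b)'` into `ℏ n_b 𝒢_b T'(𝒢_b)`, which is also the factor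
of `n*` produced by differentiating `∫₁^{x₃} n*` in `n_b P*`; hence the coefficient `2`. -/

theorem div3_vertical (f : ℝ × ℝ × ℝ → ℝ) (p : ℝ × ℝ × ℝ) :
    div3 (fun q => ((0 : ℝ), (0 : ℝ), f q)) p = pd3 f p := by
  simp only [div3, pd1, pd2, deriv_const, zero_add]

theorem Differentiable.hasDerivAt_pd3 {f : ℝ × ℝ × ℝ → ℝ} (hf : Differentiable ℝ f)
    (p : ℝ × ℝ × ℝ) : HasDerivAt (fun t => f (p.1, p.2.1, t)) (pd3 f p) p.2.2 := by
  have hline : Differentiable ℝ fun t : ℝ => (p.1, p.2.1, t) := by fun_prop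
  exact (hf.comp hline).differentiableAt.hasDerivAt

theorem hasDerivAt_linearized_flux {ℏ c N' : ℝ} {N F n_b Gb T : ℝ → ℝ}
    (hN : HasDerivAt N N' c) (hF : HasDerivAt F (N c) c)
    (hGb : HasDerivAt Gb (ℏ * n_b c * Gb c) c) (hT : DifferentiableAt ℝ T (Gb c))
    (hΦ : DifferentiableAt ℝ (fun z => n_b z * Gb z * deriv T (Gb z)) c) :
    HasDerivAt (fun t => N t * T (Gb t) + n_b t * (ℏ * F t * Gb t * deriv T (Gb t)))
      (2 * ℏ * n_b c * Gb c * deriv T (Gb c) * N c + T (Gb c) * N'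
        + ℏ * deriv (fun z => n_b z * Gb z * deriv T (Gb z)) c * F c) c := by
  set Φ : ℝ → ℝ := fun z => n_b z * Gb z * deriv T (Gb z)
  have hflux : (fun t => N t * T (Gb t) + n_b t * (ℏ * F t * Gb t * deriv T (Gb t)))
      = fun t => N t * T (Gb t) + ℏ * (F t * Φ t) := by
    funext t
    simp only [Φ]
    ring
  have hTGb : HasDerivAt (fun t => T (Gb t)) (ℏ * Φ c) c :=
    (hT.hasDerivAt.comp c hGb).congr_deriv (by ring)
  rw [hflux]
  exact ((hN.mul hTGb).add
    ((hF.mul hΦ.hasDerivAt).const_mul ℏ)).congr_deriv (by ring)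

theorem stmt_13_general (ℏ : ℝ) (n_b Gb T : ℝ → ℝ)
    (hGb : Differentiable ℝ Gb)
    (hGb' : ∀ z : ℝ, deriv Gb z = ℏ * n_b z * Gb z)
    (hT : Differentiable ℝ T)
    (hprod : Differentiable ℝ (fun z => n_b z * Gb z * deriv T (Gb z)))
    (nstar : ℝ × ℝ × ℝ → ℝ) (hns : ContDiff ℝ 1 nstar) :
    ∀ p : ℝ × ℝ × ℝ,
      div3 (fun q =>
          nstar q • ((0:ℝ), (0:ℝ), T (Gb q.2.2))
            + n_b q.2.2 •
              ((0:ℝ), (0:ℝ),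
                (ℏ * (∫ s in (1:ℝ)..q.2.2, nstar (q.1, q.2.1, s)) * Gb q.2.2)
                  * deriv T (Gb q.2.2))) p
        = 2 * ℏ * n_b p.2.2 * Gb p.2.2 * deriv T (Gb p.2.2) * nstar p
          + T (Gb p.2.2) * pd3 nstar p
          + ℏ * deriv (fun z => n_b z * Gb z * deriv T (Gb z)) p.2.2
            * ∫ s in (1:ℝ)..p.2.2, nstar (p.1, p.2.1, s) := by
  intro p
  simp only [Prod.smul_mk, smul_eq_mul, mul_zero, Prod.mk_add_mk, add_zero]
  rw [div3_vertical]
  have hslice : Continuous fun s => nstar (p.1, p.2.1, s) := by fun_prop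
  have hGbp : HasDerivAt Gb (ℏ * n_b p.2.2 * Gb p.2.2) p.2.2 :=
    hGb' p.2.2 ▸ (hGb _).hasDerivAt
  exact (hasDerivAt_linearized_flux ((hns.differentiable one_ne_zero).hasDerivAt_pd3 p)
    (hslice.integral_hasStrictDerivAt 1 p.2.2).hasDerivAt hGbp (hT _) (hprod _)).deriv

theorem stmt_13 (ℏ : ℝ) (n_b Gb T : ℝ → ℝ)
    (hnb : Differentiable ℝ n_b) (hGb : Differentiable ℝ Gb)
    (hGb' : ∀ z : ℝ, deriv Gb z = ℏ * n_b z * Gb z)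
    (hT : Differentiable ℝ T) (hT' : Differentiable ℝ (deriv T))
    (hprod : Differentiable ℝ (fun z => n_b z * Gb z * deriv T (Gb z)))
    (nstar : ℝ × ℝ × ℝ → ℝ) (hns : ContDiff ℝ 1 nstar) :
    ∀ p : ℝ × ℝ × ℝ,
      div3 (fun q =>
          nstar q • ((0:ℝ), (0:ℝ), T (Gb q.2.2))
            + n_b q.2.2 •
              ((0:ℝ), (0:ℝ),
                (ℏ * (∫ s in (1:ℝ)..q.2.2, nstar (q.1, q.2.1, s)) * Gb q.2.2)
                  * deriv T (Gb q.2.2))) p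
        = 2 * ℏ * n_b p.2.2 * Gb p.2.2 * deriv T (Gb p.2.2) * nstar p
          + T (Gb p.2.2) * pd3 nstar p
          + ℏ * deriv (fun z => n_b z * Gb z * deriv T (Gb z)) p.2.2
            * ∫ s in (1:ℝ)..p.2.2, nstar (p.1, p.2.1, s) :=
  stmt_13_general ℏ n_b Gb T hGb hGb' hT hprod nstar hns
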